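/- arXiv:2205.04562 — 5 statements merged into one kernel-verified Lean document; each statement's English description precedes it below -/
import Mathlib

section
/- With H, T, and I(u) = ⟨u,u⟩ − Φ(T(u)) as above, every minimizer u of I on H is a fixed point of T: if I(u) ≤ I(v) for all v ∈ H, then u = T(u). -/
open scoped RealInnerProductSpace

/-- Abstract Corollary 4.3: minimizers of `I` are fixed points of `T`. -/
theorem minimizer_I_fixed_point {H : Type*} [NormedAddCommGroup H]
    [InnerProductSpace ℝ H] [CompleteSpace H]
    (le : H → H → Prop)
    (hrefl : ∀ u, le u u)
    (htrans : ∀ a b c, le a b → le b c → le a c)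
    (T : H → H)
    (hTle : ∀ u, le u (T u))
    (hTmin : ∀ u v, le u v → ⟪T u, T u⟫ ≤ ⟪v, v⟫)
    (hTuniq : ∀ u v, le u v → ⟪v, v⟫ = ⟪T u, T u⟫ → v = T u)
    (hTidem : ∀ u, T (T u) = T u)
    (Φ : H → ℝ) (hΦ : ∀ u v, le u v → Φ u ≤ Φ v)
    (I : H → ℝ) (hI : ∀ u, I u = ⟪u, u⟫ - Φ (T u))
    (u : H) (hmin : ∀ v, I u ≤ I v) : u = T u := by
  have h1 := hmin (T u)
  rw [hI u, hI (T u), hTidem u] at h1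
  have h2 : ⟪u, u⟫ ≤ ⟪T u, T u⟫ := by linarith
  have h3 : ⟪T u, T u⟫ ≤ ⟪u, u⟫ := hTmin u u (hrefl u)
  exact hTuniq u u (hrefl u) (le_antisymm h2 h3)
end

section
/- With H, T, Φ monotone, J(u) = ⟨u,u⟩ − Φ(u) and I(u) = ⟨u,u⟩ − Φ(T(u)) as above, u is a minimizer of J on H if and only if u is a minimizer of I on H. Moreover, at any such minimizer, I(u) = J(u). -/
open scoped RealInnerProductSpace

/-- Abstract Proposition 4.4: `I` and `J` have the same minimizers, and the two
functionals agree at any such minimizer. -/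
theorem same_minimizers {H : Type*} [NormedAddCommGroup H]
    [InnerProductSpace ℝ H] [CompleteSpace H]
    (le : H → H → Prop)
    (hrefl : ∀ u, le u u)
    (htrans : ∀ a b c, le a b → le b c → le a c)
    (T : H → H)
    (hTle : ∀ u, le u (T u))
    (hTmin : ∀ u v, le u v → ⟪T u, T u⟫ ≤ ⟪v, v⟫)
    (hTuniq : ∀ u v, le u v → ⟪v, v⟫ = ⟪T u, T u⟫ → v = T u)
    (hTidem : ∀ u, T (T u) = T u)
    (Φ : H → ℝ) (hΦ : ∀ u v, le u v → Φ u ≤ Φ v)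
    (I J : H → ℝ)
    (hI : ∀ u, I u = ⟪u, u⟫ - Φ (T u))
    (hJ : ∀ u, J u = ⟪u, u⟫ - Φ u)
    (u : H) :
    ((∀ v, J u ≤ J v) ↔ (∀ v, I u ≤ I v)) ∧
      (((∀ v, J u ≤ J v) ∨ (∀ v, I u ≤ I v)) → I u = J u) := by

  have hIleJ : ∀ v, I v ≤ J v := fun v => by
    rw [hI, hJ]; linarith [hΦ v (T v) (hTle v)]
  have hJT : ∀ v, J (T v) ≤ I v := fun v => by
    rw [hJ, hI]; linarith [hTmin v v (hrefl v)]
  have hIT : ∀ v, I (T v) = J (T v) := fun v => by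
    rw [hI, hJ, hTidem]
  have key : ((∀ v, J u ≤ J v) ∨ (∀ v, I u ≤ I v)) → u = T u := by
    intro h
    have hEq : J (T u) = I u := by
      rcases h with hu | hu
      · exact le_antisymm (hJT u) ((hIleJ u).trans (hu (T u)))
      · exact le_antisymm (hJT u) ((hu (T u)).trans (le_of_eq (hIT u)))
    have hinner : ⟪u, u⟫ = ⟪T u, T u⟫ := by
      rw [hJ, hI] at hEq; linarith
    exact hTuniq u u (hrefl u) hinner
  have hagree : ((∀ v, J u ≤ J v) ∨ (∀ v, I u ≤ I v)) → I u = J u := by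
    intro h
    have hfix := key h
    rw [hI, hJ, ← hfix]
  refine ⟨⟨fun hu v => ?_, fun hu v => ?_⟩, hagree⟩
  · calc I u = J u := hagree (Or.inl hu)
      _ ≤ J (T v) := hu (T v)
      _ ≤ I v := hJT v
  · calc J u = I u := (hagree (Or.inr hu)).symm
      _ ≤ I v := hu v
      _ ≤ J v := hIleJ v
end

section
/- With H, T, Φ monotone, and I(u) = ⟨u,u⟩ − Φ(T(u)) as above: the infimum of I over H equals the infimum of J(u) = ⟨u,u⟩ − Φ(u) over H. -/
open scoped RealInnerProductSpace

/-- Consequence of Lemmas 4.1-4.2: `inf I = inf J` on `H`. -/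
theorem same_infimum {H : Type*} [NormedAddCommGroup H]
    [InnerProductSpace ℝ H] [CompleteSpace H]
    (le : H → H → Prop)
    (hrefl : ∀ u, le u u)
    (htrans : ∀ a b c, le a b → le b c → le a c)
    (T : H → H)
    (hTle : ∀ u, le u (T u))
    (hTmin : ∀ u v, le u v → ⟪T u, T u⟫ ≤ ⟪v, v⟫)
    (hTuniq : ∀ u v, le u v → ⟪v, v⟫ = ⟪T u, T u⟫ → v = T u)
    (hTidem : ∀ u, T (T u) = T u)
    (Φ : H → ℝ) (hΦ : ∀ u v, le u v → Φ u ≤ Φ v)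
    (I J : H → ℝ)
    (hI : ∀ u, I u = ⟪u, u⟫ - Φ (T u))
    (hJ : ∀ u, J u = ⟪u, u⟫ - Φ u) :
    (⨅ u, I u) = ⨅ u, J u := by
  rw [iInf, iInf]
  apply csInf_eq_csInf_of_forall_exists_le
  · rintro x ⟨u, rfl⟩
    refine ⟨J (T u), ⟨T u, rfl⟩, ?_⟩
    show J (T u) ≤ I u
    rw [hI, hJ]
    exact sub_le_sub_right (hTmin u u (hrefl u)) _
  · rintro y ⟨u, rfl⟩
    refine ⟨I u, ⟨u, rfl⟩, ?_⟩
    show I u ≤ J u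
    rw [hI, hJ]
    exact sub_le_sub_left (hΦ u (T u) (hTle u)) _
end

section
/- With H, ≤, T, Φ, I, J as in the previous statement and additionally J ≥ 0 on H: for u ∈ H, I(u) = 0 if and only if J(u) = 0. Moreover, if I(u) = 0 then u = T(u). -/
open scoped RealInnerProductSpace

/-- Abstract equality case of Theorem 6.2: with `J ≥ 0`, `I(u) = 0 ↔ J(u) = 0`,
and `I(u) = 0` implies `u = T u`. -/
theorem sharp_obstacle_equality_case {H : Type*} [NormedAddCommGroup H]
    [InnerProductSpace ℝ H] [CompleteSpace H]
    (le : H → H → Prop)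
    (hrefl : ∀ u, le u u)
    (htrans : ∀ a b c, le a b → le b c → le a c)
    (T : H → H)
    (hTle : ∀ u, le u (T u))
    (hTmin : ∀ u v, le u v → ⟪T u, T u⟫ ≤ ⟪v, v⟫)
    (hTuniq : ∀ u v, le u v → ⟪v, v⟫ = ⟪T u, T u⟫ → v = T u)
    (hTidem : ∀ u, T (T u) = T u)
    (Φ : H → ℝ) (hΦ : ∀ u v, le u v → Φ u ≤ Φ v)
    (I J : H → ℝ)
    (hI : ∀ u, I u = ⟪u, u⟫ - Φ (T u))
    (hJ : ∀ u, J u = ⟪u, u⟫ - Φ u)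
    (hJnonneg : ∀ u, 0 ≤ J u)
    (u : H) :
    (I u = 0 ↔ J u = 0) ∧ (I u = 0 → u = T u) := by
  have key : 0 ≤ I u := by
    have h1 := hTmin u u (hrefl u)
    have h2 := hJnonneg (T u)
    rw [hJ] at h2
    rw [hI]; linarith
  have hfix : I u = 0 → u = T u := by
    intro h0
    have h1 := hTmin u u (hrefl u)
    have h2 := hJnonneg (T u)
    rw [hJ] at h2
    rw [hI] at h0
    exact hTuniq u u (hrefl u) (by linarith)
  refine ⟨⟨fun h0 => ?_, fun h0 => ?_⟩, hfix⟩
  · have hu := hfix h0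
    rw [hI, ← hu] at h0
    rw [hJ]; exact h0
  · have hΦu := hΦ u (T u) (hTle u)
    rw [hJ] at h0
    rw [hI] at key ⊢
    linarith
end

section
/- Let H be a real Hilbert space with obstacle map T and monotone Φ, and I(u) = ⟨u,u⟩ − Φ(T(u)). Then for any u ∈ H and any fixed point w = T(w): I(u) ≥ ⟨T(u),T(u)⟩ − Φ(T(u)), i.e. I(u) ≥ J(T(u)) where J(v) = ⟨v,v⟩ − Φ(v); in particular inf_H I = inf over fixed points of T of J. -/
open scoped RealInnerProductSpace

-- No boundedness is needed: if one family is unbounded below, so is the other, and both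
-- infima take the same junk value.
theorem ciInf_eq_ciInf_of_forall_exists_le {α ι κ : Type*} [ConditionallyCompleteLinearOrder α]
    {f : ι → α} {g : κ → α} (hf : ∀ i, ∃ k, g k ≤ f i) (hg : ∀ k, ∃ i, f i ≤ g k) :
    ⨅ i, f i = ⨅ k, g k :=
  csInf_eq_csInf_of_forall_exists_le (s := Set.range f) (t := Set.range g)
    (by rintro _ ⟨i, rfl⟩; obtain ⟨k, hk⟩ := hf i; exact ⟨g k, ⟨k, rfl⟩, hk⟩)
    (by rintro _ ⟨k, rfl⟩; obtain ⟨i, hi⟩ := hg k; exact ⟨f i, ⟨i, rfl⟩, hi⟩)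

theorem reduction_to_fixed_points_general {H : Type*} [NormedAddCommGroup H]
    [InnerProductSpace ℝ H]
    (le : H → H → Prop)
    (hrefl : ∀ u, le u u)
    (T : H → H)
    (hTmin : ∀ u v, le u v → ⟪T u, T u⟫ ≤ ⟪v, v⟫)
    (hTidem : ∀ u, T (T u) = T u)
    (Φ : H → ℝ)
    (I J : H → ℝ)
    (hI : ∀ u, I u = ⟪u, u⟫ - Φ (T u))
    (hJ : ∀ u, J u = ⟪u, u⟫ - Φ u) :
    (∀ u, J (T u) ≤ I u) ∧
      (⨅ u, I u) = ⨅ w : {w : H // T w = w}, J w := by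
  have hJT_le_I : ∀ u, J (T u) ≤ I u := fun u => by
    -- `u` is itself admissible for the obstacle problem solved by `T u`
    have hT_le : ⟪T u, T u⟫ ≤ ⟪u, u⟫ := hTmin u u (hrefl u)
    rw [hI, hJ]
    linarith
  have hI_eq_J : ∀ w, T w = w → I w = J w := fun w hw => by rw [hI, hJ, hw]
  refine ⟨hJT_le_I, ciInf_eq_ciInf_of_forall_exists_le ?_ ?_⟩
  · exact fun u => ⟨⟨T u, hTidem u⟩, hJT_le_I u⟩
  · exact fun ⟨w, hw⟩ => ⟨w, (hI_eq_J w hw).le⟩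

/-- Abstract reduction: `I(u) ≥ J(T u)` for all `u`, hence the infimum of `I`
over `H` equals the infimum of `J` over the fixed points of `T`. -/
theorem reduction_to_fixed_points {H : Type*} [NormedAddCommGroup H]
    [InnerProductSpace ℝ H] [CompleteSpace H]
    (le : H → H → Prop)
    (hrefl : ∀ u, le u u)
    (htrans : ∀ a b c, le a b → le b c → le a c)
    (T : H → H)
    (hTle : ∀ u, le u (T u))
    (hTmin : ∀ u v, le u v → ⟪T u, T u⟫ ≤ ⟪v, v⟫)
    (hTuniq : ∀ u v, le u v → ⟪v, v⟫ = ⟪T u, T u⟫ → v = T u)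
    (hTidem : ∀ u, T (T u) = T u)
    (Φ : H → ℝ) (hΦ : ∀ u v, le u v → Φ u ≤ Φ v)
    (I J : H → ℝ)
    (hI : ∀ u, I u = ⟪u, u⟫ - Φ (T u))
    (hJ : ∀ u, J u = ⟪u, u⟫ - Φ u) :
    (∀ u, J (T u) ≤ I u) ∧
      (⨅ u, I u) = ⨅ w : {w : H // T w = w}, J w :=
  reduction_to_fixed_points_general le hrefl T hTmin hTidem Φ I J hI hJ
end
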